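/- arXiv:1504.00080 — 2 statements merged into one kernel-verified Lean document; each statement's English description precedes it below -/
import Mathlib

section
/- On a complete graph, for any finitely supported f and t ≥ 0, the time derivative of Γ(P_t f) is ℓ¹-bounded: ‖(d/dt) Γ(P_t f)‖_{ℓ¹(V,m)} ≤ 2√(Q(f) Q(Δf)). -/
/-!
Write `u = P_t f` and `v = Δ P_t f = P_t Δf`. Cauchy–Schwarz over the edges gives
`‖2Γ(u, v)‖₁ ≤ ∑_{x,y} μ_{xy} |∇u| |∇v| ≤ √(2Q(u)) √(2Q(v))`, so it suffices that the heat flow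
does not increase the energy: `Q(P_t g) ≤ Q(g)` for finitely supported `g`.

On an infinite graph this needs the cut-off functions `η` provided by completeness. For
`G(r) = ∑_{x,y} μ_{xy} η(x)² (∇P_r g)²`, Green's formula makes the part `∇(η² ΔP_r g)` of `G'`
dissipative, and Cauchy–Schwarz bounds the remaining commutator term by
`4 √(2 ‖Γ(η)‖_∞) ‖ΔP_r g‖₂ √G ≤ 4 √(2 ‖Γ(η)‖_∞) ‖Δg‖₂ √G`, the heat semigroup being an
`ℓ²`-contraction. Hence `√G(t) ≤ √G(0) + O(√‖Γ(η)‖_∞) t`, and letting `η → 1` with `Γ(η) → 0`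
gives `2 Q(P_t g) ≤ 2 Q(g)`.
-/

open scoped BigOperators
open Filter

/-- The carré du champ operator. -/
noncomputable def gam {V : Type*} (m : V → ℝ) (μ : V → V → ℝ) (f g : V → ℝ) (x : V) : ℝ :=
  (1 / (2 * m x)) * ∑' y, μ x y * (f y - f x) * (g y - g x)

/-- The formal graph Laplacian. -/
noncomputable def lap {V : Type*} (m : V → ℝ) (μ : V → V → ℝ) (f : V → ℝ) (x : V) : ℝ :=
  (1 / m x) * ∑' y, μ x y * (f y - f x)

/-- The Dirichlet energy `Q(f) = (1/2) ∑_{x,y} μ_{xy} (f y - f x)²`. -/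
noncomputable def QN {V : Type*} (μ : V → V → ℝ) (f : V → ℝ) : ℝ :=
  (1 / 2) * ∑' p : V × V, μ p.1 p.2 * (f p.2 - f p.1) ^ 2

/-- The `ℓ²(V,m)` norm. -/
noncomputable def l2n {V : Type*} (m : V → ℝ) (f : V → ℝ) : ℝ :=
  Real.sqrt (∑' x, f x ^ 2 * m x)

/-- The iterated carré du champ `Γ₂(f) = (1/2) Δ Γ(f) - Γ(f, Δ f)`. -/
noncomputable def gam2 {V : Type*} (m : V → ℝ) (μ : V → V → ℝ) (f : V → ℝ) (x : V) : ℝ :=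
  (1 / 2) * lap m μ (fun y => gam m μ f f y) x - gam m μ f (lap m μ f) x

open Function Finset

theorem sqrt_le_sqrt_add_mul_of_hasDerivAt_le {G D : ℝ → ℝ} {C t : ℝ} (hC : 0 ≤ C) (ht : 0 ≤ t)
    (hG0 : ∀ r, 0 ≤ G r) (hG : ∀ r, HasDerivAt G (D r) r)
    (hD : ∀ r ∈ Set.Icc 0 t, D r ≤ C * √(G r)) :
    √(G t) ≤ √(G 0) + C / 2 * t := by
  -- `√G` may fail to be differentiable where `G = 0`, so work with `√(G + δ)` and let `δ → 0`.
  have hδ : ∀ δ > 0, √(G t + δ) ≤ √(G 0 + δ) + C / 2 * t := by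
    intro δ hδ
    have hpos : ∀ r, 0 < G r + δ := fun r => by linarith [hG0 r]
    have hderiv : ∀ r, HasDerivAt (fun r => √(G r + δ)) (D r / (2 * √(G r + δ))) r :=
      fun r => ((hG r).add_const δ).sqrt (hpos r).ne'
    have hdiff : Differentiable ℝ fun r => √(G r + δ) := fun r => (hderiv r).differentiableAt
    have hmvt := (convex_Icc 0 t).image_sub_le_mul_sub_of_deriv_le hdiff.continuous.continuousOn
      hdiff.differentiableOn (C := C / 2) (fun r hr => ?_) 0 (Set.left_mem_Icc.2 ht) t
      (Set.right_mem_Icc.2 ht) ht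
    · linarith
    rw [(hderiv r).deriv, div_le_iff₀ (by positivity [Real.sqrt_pos.2 (hpos r)])]
    calc D r ≤ C * √(G r) := hD r (interior_subset hr)
      _ ≤ C * √(G r + δ) := mul_le_mul_of_nonneg_left (Real.sqrt_le_sqrt (by linarith)) hC
      _ = C / 2 * (2 * √(G r + δ)) := by ring
  have hlim : Tendsto (fun δ => √(G 0 + δ) + C / 2 * t) (nhdsWithin 0 (Set.Ioi 0))
      (nhds (√(G 0) + C / 2 * t)) := by
    have := ((continuous_const.add continuous_id).sqrt.add continuous_const).tendsto
      (f := fun δ : ℝ => √(G 0 + δ) + C / 2 * t) 0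
    simpa using this.mono_left nhdsWithin_le_nhds
  exact ge_of_tendsto hlim (eventually_nhdsWithin_of_forall fun δ hδpos =>
    (Real.sqrt_le_sqrt (by linarith [Set.mem_Ioi.1 hδpos])).trans (hδ δ hδpos))

theorem summable_and_tsum_sqrt_mul_sqrt_le {ι : Type*} {f g : ι → ℝ} (hf : ∀ i, 0 ≤ f i)
    (hg : ∀ i, 0 ≤ g i) (hfs : Summable f) (hgs : Summable g) :
    Summable (fun i => √(f i) * √(g i)) ∧ ∑' i, √(f i) * √(g i) ≤ √(∑' i, f i) * √(∑' i, g i) := by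
  have hpartial : ∀ s : Finset ι, ∑ i ∈ s, √(f i) * √(g i) ≤ √(∑' i, f i) * √(∑' i, g i) :=
    fun s => (Real.sum_sqrt_mul_sqrt_le s hf hg).trans <|
      mul_le_mul (Real.sqrt_le_sqrt (hfs.sum_le_tsum s fun i _ => hf i))
        (Real.sqrt_le_sqrt (hgs.sum_le_tsum s fun i _ => hg i)) (Real.sqrt_nonneg _)
        (Real.sqrt_nonneg _)
  have hnonneg : 0 ≤ fun i => √(f i) * √(g i) := fun i => by positivity
  exact ⟨summable_of_sum_le hnonneg hpartial, Real.tsum_le_of_sum_le hnonneg hpartial⟩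

section WeightedGraph

variable {V : Type*} {m : V → ℝ} {μ : V → V → ℝ}

theorem summable_mul_of_support_finite (hlf : ∀ x, (support (μ x)).Finite) (x : V) (F : V → ℝ) :
    Summable fun y => μ x y * F y :=
  summable_of_hasFiniteSupport ((hlf x).subset (support_mul_subset_left _ _))

theorem two_mul_mul_gam (hm : ∀ x, 0 < m x) (f g : V → ℝ) (x : V) :
    2 * m x * gam m μ f g x = ∑' y, μ x y * ((f y - f x) * (g y - g x)) := by
  simp only [gam, mul_assoc]
  field_simp [(hm x).ne']

theorem two_mul_QN (μ : V → V → ℝ) (f : V → ℝ) :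
    2 * QN μ f = ∑' p : V × V, μ p.1 p.2 * (f p.2 - f p.1) ^ 2 := by
  rw [QN]
  ring

theorem QN_nonneg (hnn : ∀ x y, 0 ≤ μ x y) (f : V → ℝ) : 0 ≤ QN μ f :=
  mul_nonneg (by norm_num) (tsum_nonneg fun p => mul_nonneg (hnn _ _) (sq_nonneg _))

theorem lap_support_finite (hsym : ∀ x y, μ x y = μ y x) (hlf : ∀ x, (support (μ x)).Finite)
    {f : V → ℝ} (hf : (support f).Finite) : (support (lap m μ f)).Finite := by
  refine (hf.union (hf.biUnion fun y _ => hlf y)).subset fun x hx => ?_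
  by_contra hxS
  simp only [Set.mem_union, Set.mem_iUnion, mem_support, not_or, not_exists, not_not] at hxS
  obtain ⟨hfx, hμ⟩ := hxS
  refine hx ?_
  have hterm : ∀ y, μ x y * (f y - f x) = 0 := fun y => by
    by_cases hfy : f y = 0
    · simp [hfy, hfx]
    · rw [hsym, hμ y hfy, zero_mul]
  simp [lap, hterm]

theorem summable_sq_grad_of_support_finite (hsym : ∀ x y, μ x y = μ y x)
    (hlf : ∀ x, (support (μ x)).Finite) {f : V → ℝ} (hf : (support f).Finite) :
    Summable fun p : V × V => μ p.1 p.2 * (f p.2 - f p.1) ^ 2 := by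
  refine summable_of_hasFiniteSupport (Set.Finite.subset
    ((hf.biUnion fun x _ => (Set.finite_singleton x).prod (hlf x)).union
      (hf.biUnion fun y _ => (hlf y).prod (Set.finite_singleton y))) fun p hp => ?_)
  obtain ⟨x, y⟩ := p
  have hμ : μ x y ≠ 0 := left_ne_zero_of_mul hp
  have hne : f y - f x ≠ 0 := pow_ne_zero_iff two_ne_zero |>.1 (right_ne_zero_of_mul hp)
  simp only [Set.mem_union, Set.mem_iUnion, Set.mem_prod, Set.mem_singleton_iff, mem_support]
  by_cases hfx : f x = 0
  · exact Or.inr ⟨y, fun hfy => hne (by rw [hfy, hfx, sub_zero]), by rwa [hsym], rfl⟩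
  · exact Or.inl ⟨x, hfx, rfl, hμ⟩

theorem exists_finset_support_neighbors_subset (hlf : ∀ x, (support (μ x)).Finite) {e : V → ℝ}
    (he : (support e).Finite) :
    ∃ T : Finset V, ∀ x, e x ≠ 0 → x ∈ T ∧ ∀ y, μ x y ≠ 0 → y ∈ T := by
  classical
  refine ⟨he.toFinset ∪ he.toFinset.biUnion fun x => (hlf x).toFinset,
    fun x hx => ⟨?_, fun y hy => ?_⟩⟩
  · exact mem_union_left _ (he.mem_toFinset.2 hx)
  · exact mem_union_right _ (mem_biUnion.2 ⟨x, he.mem_toFinset.2 hx, (hlf x).mem_toFinset.2 hy⟩)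

theorem gam_comp_self_le (hm : ∀ x, 0 < m x) (hnn : ∀ x y, 0 ≤ μ x y)
    (hlf : ∀ x, (support (μ x)).Finite) {φ : ℝ → ℝ} (hφ : LipschitzWith 1 φ) (f : V → ℝ)
    (x : V) : gam m μ (φ ∘ f) (φ ∘ f) x ≤ gam m μ f f x := by
  refine le_of_mul_le_mul_left ?_ (by linarith [hm x] : 0 < 2 * m x)
  rw [two_mul_mul_gam hm, two_mul_mul_gam hm]
  refine (summable_mul_of_support_finite hlf x _).tsum_le_tsum (fun y => ?_)
    (summable_mul_of_support_finite hlf x _)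
  refine mul_le_mul_of_nonneg_left ?_ (hnn x y)
  have h := hφ.dist_le_mul (f y) (f x)
  rw [NNReal.coe_one, one_mul, Real.dist_eq, Real.dist_eq] at h
  simpa only [comp_apply, abs_mul_abs_self] using mul_self_le_mul_self (abs_nonneg _) h

theorem sum_sum_grad_mul_grad_eq (hm : ∀ x, 0 < m x) (hsym : ∀ x y, μ x y = μ y x)
    (u h : V → ℝ) {T : Finset V} (hT : ∀ x, h x ≠ 0 → x ∈ T ∧ ∀ y, μ x y ≠ 0 → y ∈ T) :
    ∑ x ∈ T, ∑ y ∈ T, μ x y * ((u y - u x) * (h y - h x)) =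
      -2 * ∑ x ∈ T, h x * lap m μ u x * m x := by
  have hrow : ∀ x ∈ T, ∑ y ∈ T, μ x y * (u y - u x) * h x = h x * lap m μ u x * m x := by
    intro x _
    by_cases hx : h x = 0
    · simp [hx]
    have hlap : ∑' y, μ x y * (u y - u x) = ∑ y ∈ T, μ x y * (u y - u x) :=
      tsum_eq_sum fun y hy => by rw [not_ne_iff.1 (mt ((hT x hx).2 y) hy), zero_mul]
    rw [← sum_mul, ← hlap, lap]
    field_simp [(hm x).ne']
  have hswap : ∑ x ∈ T, ∑ y ∈ T, μ x y * (u y - u x) * h y =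
      -∑ x ∈ T, ∑ y ∈ T, μ x y * (u y - u x) * h x := by
    rw [sum_comm, ← sum_neg_distrib]
    refine sum_congr rfl fun x _ => ?_
    rw [← sum_neg_distrib]
    refine sum_congr rfl fun y _ => ?_
    rw [hsym]
    ring
  calc ∑ x ∈ T, ∑ y ∈ T, μ x y * ((u y - u x) * (h y - h x))
      = ∑ x ∈ T, ∑ y ∈ T, μ x y * (u y - u x) * h y -
          ∑ x ∈ T, ∑ y ∈ T, μ x y * (u y - u x) * h x := by
        simp only [← sum_sub_distrib]
        exact sum_congr rfl fun x _ => sum_congr rfl fun y _ => by ring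
    _ = -2 * ∑ x ∈ T, h x * lap m μ u x * m x := by
        rw [hswap, sum_congr rfl hrow]
        ring

def cutoffEnergy (μ : V → V → ℝ) (e : V → ℝ) (T : Finset V) (u : V → ℝ) : ℝ :=
  ∑ x ∈ T, ∑ y ∈ T, μ x y * e x ^ 2 * (u y - u x) ^ 2

theorem cutoffEnergy_nonneg (hnn : ∀ x y, 0 ≤ μ x y) (e : V → ℝ) (T : Finset V) (u : V → ℝ) :
    0 ≤ cutoffEnergy μ e T u :=
  sum_nonneg fun x _ => sum_nonneg fun y _ => by positivity [hnn x y]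

theorem cutoffEnergy_eq_sum_product (μ : V → V → ℝ) (e : V → ℝ) (T : Finset V) (u : V → ℝ) :
    cutoffEnergy μ e T u = ∑ p ∈ T ×ˢ T, μ p.1 p.2 * e p.1 ^ 2 * (u p.2 - u p.1) ^ 2 :=
  (sum_product T T fun p => μ p.1 p.2 * e p.1 ^ 2 * (u p.2 - u p.1) ^ 2).symm

theorem sum_le_cutoffEnergy (hnn : ∀ x y, 0 ≤ μ x y) {e : V → ℝ} {T : Finset V}
    (hT : ∀ x, e x ≠ 0 → x ∈ T ∧ ∀ y, μ x y ≠ 0 → y ∈ T) (u : V → ℝ) (s : Finset (V × V)) :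
    ∑ p ∈ s, μ p.1 p.2 * e p.1 ^ 2 * (u p.2 - u p.1) ^ 2 ≤ cutoffEnergy μ e T u := by
  classical
  have hvanish : ∀ p ∉ T ×ˢ T, μ p.1 p.2 * e p.1 ^ 2 * (u p.2 - u p.1) ^ 2 = 0 := by
    rintro ⟨x, y⟩ hp
    by_cases hex : e x = 0
    · simp [hex]
    have hμ : μ x y = 0 := by
      by_contra hμ
      exact hp (mem_product.2 ⟨(hT x hex).1, (hT x hex).2 y hμ⟩)
    simp [hμ]
  rw [cutoffEnergy_eq_sum_product, sum_subset (subset_union_right (s₁ := s))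
    fun p _ hp => hvanish p hp]
  exact sum_le_sum_of_subset_of_nonneg subset_union_left fun p _ _ => by positivity [hnn p.1 p.2]

theorem cutoffEnergy_le_two_mul_QN (hnn : ∀ x y, 0 ≤ μ x y) {e : V → ℝ} (he1 : ∀ x, |e x| ≤ 1)
    (T : Finset V) {u : V → ℝ} (hu : Summable fun p : V × V => μ p.1 p.2 * (u p.2 - u p.1) ^ 2) :
    cutoffEnergy μ e T u ≤ 2 * QN μ u := by
  rw [two_mul_QN, cutoffEnergy_eq_sum_product]
  refine (sum_le_sum fun p _ => ?_).trans
    (hu.sum_le_tsum _ fun p _ => mul_nonneg (hnn _ _) (sq_nonneg _))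
  have := (sq_le_one_iff_abs_le_one _).2 (he1 p.1)
  have := mul_nonneg (hnn p.1 p.2) (sq_nonneg (u p.2 - u p.1))
  nlinarith

theorem hasDerivAt_cutoffEnergy (e : V → ℝ) (T : Finset V) {u : ℝ → V → ℝ} {u' : V → ℝ} {r : ℝ}
    (hu : ∀ x, HasDerivAt (fun s => u s x) (u' x) r) :
    HasDerivAt (fun s => cutoffEnergy μ e T (u s))
      (2 * ∑ x ∈ T, ∑ y ∈ T, μ x y * e x ^ 2 * ((u r y - u r x) * (u' y - u' x))) r := by
  simp only [cutoffEnergy, mul_sum]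
  refine HasDerivAt.fun_sum fun x _ => HasDerivAt.fun_sum fun y _ => ?_
  exact (((hu y).sub (hu x)).pow 2).const_mul (μ x y * e x ^ 2) |>.congr_deriv
    (by simp only [Pi.sub_apply]; ring)

theorem sum_sum_sq_grad_mul_add_sq_le (hsym : ∀ x y, μ x y = μ y x) (hnn : ∀ x y, 0 ≤ μ x y)
    (e u : V → ℝ) (T : Finset V) :
    ∑ x ∈ T, ∑ y ∈ T, μ x y * (u y - u x) ^ 2 * (e x + e y) ^ 2 ≤ 4 * cutoffEnergy μ e T u := by
  have hswap : ∑ x ∈ T, ∑ y ∈ T, μ x y * e y ^ 2 * (u y - u x) ^ 2 = cutoffEnergy μ e T u := by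
    rw [cutoffEnergy, sum_comm]
    exact sum_congr rfl fun x _ => sum_congr rfl fun y _ => by rw [hsym]; ring
  calc ∑ x ∈ T, ∑ y ∈ T, μ x y * (u y - u x) ^ 2 * (e x + e y) ^ 2
      ≤ ∑ x ∈ T, ∑ y ∈ T, (2 * (μ x y * e x ^ 2 * (u y - u x) ^ 2) +
          2 * (μ x y * e y ^ 2 * (u y - u x) ^ 2)) := by
        refine sum_le_sum fun x _ => sum_le_sum fun y _ => ?_
        nlinarith [mul_nonneg (hnn x y) (sq_nonneg (u y - u x)), sq_nonneg (e x - e y)]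
    _ = 4 * cutoffEnergy μ e T u := by
        simp only [sum_add_distrib, ← mul_sum, hswap, cutoffEnergy]
        ring

theorem neg_sum_sum_grad_mul_grad_sq_le (hsym : ∀ x y, μ x y = μ y x) (hnn : ∀ x y, 0 ≤ μ x y)
    (e u w : V → ℝ) (T : Finset V) :
    -∑ x ∈ T, ∑ y ∈ T, μ x y * (u y - u x) * w y * (e y ^ 2 - e x ^ 2) ≤
      2 * √(cutoffEnergy μ e T u) * √(∑ x ∈ T, ∑ y ∈ T, μ x y * w y ^ 2 * (e y - e x) ^ 2) := by
  set A : V → V → ℝ := fun x y => μ x y * (u y - u x) ^ 2 * (e x + e y) ^ 2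
  set B : V → V → ℝ := fun x y => μ x y * w y ^ 2 * (e y - e x) ^ 2
  have hA : ∀ x y, 0 ≤ A x y := fun x y => by positivity [hnn x y]
  have hB : ∀ x y, 0 ≤ B x y := fun x y => by positivity [hnn x y]
  have hterm : ∀ x y, -(μ x y * (u y - u x) * w y * (e y ^ 2 - e x ^ 2)) ≤
      √(A x y) * √(B x y) := fun x y => by
    rw [← Real.sqrt_mul (hA x y),
      show A x y * B x y = (μ x y * (u y - u x) * w y * (e y ^ 2 - e x ^ 2)) ^ 2 by
        simp only [A, B]; ring, Real.sqrt_sq_eq_abs]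
    exact neg_le_abs _
  have hcs : ∑ x ∈ T, ∑ y ∈ T, √(A x y) * √(B x y) ≤
      √(∑ x ∈ T, ∑ y ∈ T, A x y) * √(∑ x ∈ T, ∑ y ∈ T, B x y) := by
    simpa only [sum_product] using
      Real.sum_sqrt_mul_sqrt_le (T ×ˢ T) (fun p => hA p.1 p.2) (fun p => hB p.1 p.2)
  have hAle : √(∑ x ∈ T, ∑ y ∈ T, A x y) ≤ 2 * √(cutoffEnergy μ e T u) := by
    rw [show (2 : ℝ) = √(2 ^ 2) by simp, ← Real.sqrt_mul (by positivity)]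
    exact Real.sqrt_le_sqrt ((sum_sum_sq_grad_mul_add_sq_le hsym hnn e u T).trans_eq (by ring))
  calc -∑ x ∈ T, ∑ y ∈ T, μ x y * (u y - u x) * w y * (e y ^ 2 - e x ^ 2)
      ≤ ∑ x ∈ T, ∑ y ∈ T, √(A x y) * √(B x y) := by
        simp only [← sum_neg_distrib]
        exact sum_le_sum fun x _ => sum_le_sum fun y _ => hterm x y
    _ ≤ 2 * √(cutoffEnergy μ e T u) * √(∑ x ∈ T, ∑ y ∈ T, B x y) :=
        hcs.trans (mul_le_mul_of_nonneg_right hAle (Real.sqrt_nonneg _))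

theorem sum_sum_cutoff_grad_mul_grad_lap_le (hm : ∀ x, 0 < m x) (hsym : ∀ x y, μ x y = μ y x)
    (hnn : ∀ x y, 0 ≤ μ x y) {e : V → ℝ} (u : V → ℝ) {T : Finset V}
    (hT : ∀ x, e x ≠ 0 → x ∈ T ∧ ∀ y, μ x y ≠ 0 → y ∈ T) :
    ∑ x ∈ T, ∑ y ∈ T, μ x y * e x ^ 2 * ((u y - u x) * (lap m μ u y - lap m μ u x)) ≤
      2 * √(cutoffEnergy μ e T u) *
        √(∑ x ∈ T, ∑ y ∈ T, μ x y * lap m μ u y ^ 2 * (e y - e x) ^ 2) := by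
  set w := lap m μ u
  set h : V → ℝ := fun x => e x ^ 2 * w x
  -- `e² ∇w = ∇(e² w) - w ∇(e²)`; the first part is dissipative by Green's formula.
  have hsplit : ∑ x ∈ T, ∑ y ∈ T, μ x y * e x ^ 2 * ((u y - u x) * (w y - w x)) =
      ∑ x ∈ T, ∑ y ∈ T, μ x y * ((u y - u x) * (h y - h x)) -
        ∑ x ∈ T, ∑ y ∈ T, μ x y * (u y - u x) * w y * (e y ^ 2 - e x ^ 2) := by
    simp only [← sum_sub_distrib]
    exact sum_congr rfl fun x _ => sum_congr rfl fun y _ => by ring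
  have hdiss : ∑ x ∈ T, ∑ y ∈ T, μ x y * ((u y - u x) * (h y - h x)) ≤ 0 := by
    rw [sum_sum_grad_mul_grad_eq hm hsym u h fun x hx => hT x fun he => hx (by simp [h, he])]
    have : 0 ≤ ∑ x ∈ T, h x * w x * m x :=
      sum_nonneg fun x _ => by
        simpa only [h, mul_assoc, ← sq] using
          mul_nonneg (sq_nonneg (e x)) (mul_nonneg (sq_nonneg (w x)) (hm x).le)
    linarith
  linarith [neg_sum_sum_grad_mul_grad_sq_le hsym hnn e u w T]

theorem sum_sum_sq_mul_sq_grad_le (hm : ∀ x, 0 < m x) (hsym : ∀ x y, μ x y = μ y x)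
    (hnn : ∀ x y, 0 ≤ μ x y) (hlf : ∀ x, (support (μ x)).Finite) {e : V → ℝ} {c : ℝ}
    (hc : ∀ x, gam m μ e e x ≤ c) (w : V → ℝ) (T : Finset V) :
    ∑ x ∈ T, ∑ y ∈ T, μ x y * w y ^ 2 * (e y - e x) ^ 2 ≤ 2 * c * ∑ y ∈ T, w y ^ 2 * m y := by
  have hrow : ∀ y, ∑ x ∈ T, μ y x * ((e x - e y) * (e x - e y)) ≤ 2 * m y * c := fun y =>
    calc ∑ x ∈ T, μ y x * ((e x - e y) * (e x - e y))
        ≤ ∑' x, μ y x * ((e x - e y) * (e x - e y)) :=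
          (summable_mul_of_support_finite hlf y _).sum_le_tsum T
            fun x _ => mul_nonneg (hnn y x) (mul_self_nonneg _)
      _ = 2 * m y * gam m μ e e y := (two_mul_mul_gam hm e e y).symm
      _ ≤ 2 * m y * c := mul_le_mul_of_nonneg_left (hc y) (by linarith [hm y])
  rw [sum_comm, mul_sum]
  refine sum_le_sum fun y _ => ?_
  calc ∑ x ∈ T, μ x y * w y ^ 2 * (e y - e x) ^ 2
      = w y ^ 2 * ∑ x ∈ T, μ y x * ((e x - e y) * (e x - e y)) := by
        rw [mul_sum]
        exact sum_congr rfl fun x _ => by rw [hsym]; ring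
    _ ≤ w y ^ 2 * (2 * m y * c) := mul_le_mul_of_nonneg_left (hrow y) (sq_nonneg _)
    _ = 2 * c * (w y ^ 2 * m y) := by ring

theorem cutoffEnergy_le_of_hasDerivAt (hm : ∀ x, 0 < m x) (hsym : ∀ x y, μ x y = μ y x)
    (hnn : ∀ x y, 0 ≤ μ x y) (hlf : ∀ x, (support (μ x)).Finite) {u : ℝ → V → ℝ}
    (hu : ∀ x r, HasDerivAt (fun s => u s x) (lap m μ (u r) x) r) {W : ℝ}
    (hW : ∀ r, 0 ≤ r → Summable (fun x => lap m μ (u r) x ^ 2 * m x) ∧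
      ∑' x, lap m μ (u r) x ^ 2 * m x ≤ W)
    (hu0 : Summable fun p : V × V => μ p.1 p.2 * (u 0 p.2 - u 0 p.1) ^ 2)
    {e : V → ℝ} {T : Finset V} (hT : ∀ x, e x ≠ 0 → x ∈ T ∧ ∀ y, μ x y ≠ 0 → y ∈ T)
    (he1 : ∀ x, |e x| ≤ 1) {c : ℝ} (hc0 : 0 ≤ c) (hc : ∀ x, gam m μ e e x ≤ c)
    {t : ℝ} (ht : 0 ≤ t) :
    cutoffEnergy μ e T (u t) ≤ (√(2 * QN μ (u 0)) + 2 * √(2 * c * W) * t) ^ 2 := by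
  have hD : ∀ r ∈ Set.Icc 0 t, 2 * ∑ x ∈ T, ∑ y ∈ T, μ x y * e x ^ 2 *
      ((u r y - u r x) * (lap m μ (u r) y - lap m μ (u r) x)) ≤
        4 * √(2 * c * W) * √(cutoffEnergy μ e T (u r)) := by
    intro r hr
    have hE := (sum_sum_sq_mul_sq_grad_le hm hsym hnn hlf hc (lap m μ (u r)) T).trans
      (mul_le_mul_of_nonneg_left (((hW r hr.1).1.sum_le_tsum T
        fun x _ => mul_nonneg (sq_nonneg _) (hm x).le).trans (hW r hr.1).2) (by positivity))
    have := sum_sum_cutoff_grad_mul_grad_lap_le hm hsym hnn (u r) hT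
    have := mul_le_mul_of_nonneg_left (Real.sqrt_le_sqrt hE)
      (Real.sqrt_nonneg (cutoffEnergy μ e T (u r)))
    linarith
  have hsqrt := sqrt_le_sqrt_add_mul_of_hasDerivAt_le (by positivity) ht
    (fun r => cutoffEnergy_nonneg hnn e T (u r))
    (fun r => hasDerivAt_cutoffEnergy e T fun x => hu x r) hD
  rw [← Real.sq_sqrt (cutoffEnergy_nonneg hnn e T (u t))]
  refine pow_le_pow_left₀ (Real.sqrt_nonneg _) (hsqrt.trans ?_) 2
  linarith [Real.sqrt_le_sqrt (cutoffEnergy_le_two_mul_QN hnn he1 T hu0)]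

theorem exists_lipschitzWith_one_clamp :
    ∃ φ : ℝ → ℝ, LipschitzWith 1 φ ∧ φ 0 = 0 ∧ φ 1 = 1 ∧ ∀ a, |φ a| ≤ 1 := by
  refine ⟨fun a => Set.projIcc 0 1 zero_le_one a,
    mul_one (1 : NNReal) ▸
      (LipschitzWith.subtype_val _).comp (LipschitzWith.projIcc (zero_le_one' ℝ)),
    by simp [Set.projIcc_left], by simp [Set.projIcc_right], fun a => ?_⟩
  obtain ⟨h0, h1⟩ := (Set.projIcc 0 1 zero_le_one a).2
  exact abs_le.2 ⟨by linarith, h1⟩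

theorem summable_and_tsum_sq_grad_le_of_cutoffs (hnn : ∀ x y, 0 ≤ μ x y) {e : ℕ → V → ℝ}
    (he : ∀ x, Tendsto (fun k => e k x) atTop (nhds 1)) {v : V → ℝ} {b : ℕ → ℝ} {B : ℝ}
    (hb : Tendsto b atTop (nhds B))
    (hbound : ∀ᶠ k in atTop, ∀ s : Finset (V × V),
      ∑ p ∈ s, μ p.1 p.2 * e k p.1 ^ 2 * (v p.2 - v p.1) ^ 2 ≤ b k) :
    Summable (fun p : V × V => μ p.1 p.2 * (v p.2 - v p.1) ^ 2) ∧
      ∑' p : V × V, μ p.1 p.2 * (v p.2 - v p.1) ^ 2 ≤ B := by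
  have hpartial : ∀ s : Finset (V × V), ∑ p ∈ s, μ p.1 p.2 * (v p.2 - v p.1) ^ 2 ≤ B := by
    intro s
    have hlim : Tendsto (fun k => ∑ p ∈ s, μ p.1 p.2 * e k p.1 ^ 2 * (v p.2 - v p.1) ^ 2) atTop
        (nhds (∑ p ∈ s, μ p.1 p.2 * (v p.2 - v p.1) ^ 2)) :=
      tendsto_finsetSum _ fun p _ => by
        simpa using (((he p.1).pow 2).const_mul (μ p.1 p.2)).mul_const ((v p.2 - v p.1) ^ 2)
    exact le_of_tendsto_of_tendsto hlim hb (hbound.mono fun k hk => hk s)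
  have hnonneg : 0 ≤ fun p : V × V => μ p.1 p.2 * (v p.2 - v p.1) ^ 2 :=
    fun p => mul_nonneg (hnn _ _) (sq_nonneg _)
  exact ⟨summable_of_sum_le hnonneg hpartial, Real.tsum_le_of_sum_le hnonneg hpartial⟩

theorem QN_heat_le (hm : ∀ x, 0 < m x) (hsym : ∀ x y, μ x y = μ y x) (hnn : ∀ x y, 0 ≤ μ x y)
    (hlf : ∀ x, (support (μ x)).Finite) (η : ℕ → V → ℝ)
    (hηfin : ∀ k, (support (η k)).Finite) (hηlim : ∀ x, Tendsto (fun k => η k x) atTop (nhds 1))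
    (hηgam : ∀ k x, 1 ≤ k → gam m μ (η k) (η k) x ≤ 1 / (k : ℝ))
    (P : ℝ → (V → ℝ) → V → ℝ) (hP0 : ∀ f, P 0 f = f)
    (hheat : ∀ (f : V → ℝ) (x : V) (t : ℝ), HasDerivAt (fun s => P s f x) (lap m μ (P t f) x) t)
    (hPcomm : ∀ f : V → ℝ, (support f).Finite → ∀ t, P t (lap m μ f) = lap m μ (P t f))
    (hPl2 : ∀ f : V → ℝ, Summable (fun x => f x ^ 2 * m x) → ∀ t, 0 ≤ t →
      Summable (fun x => (P t f x) ^ 2 * m x) ∧ ∑' x, (P t f x) ^ 2 * m x ≤ ∑' x, f x ^ 2 * m x)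
    {g : V → ℝ} (hg : (support g).Finite) {t : ℝ} (ht : 0 ≤ t) :
    Summable (fun p : V × V => μ p.1 p.2 * (P t g p.2 - P t g p.1) ^ 2) ∧
      QN μ (P t g) ≤ QN μ g := by
  set W := ∑' x, lap m μ g x ^ 2 * m x
  have hW : ∀ r, 0 ≤ r → Summable (fun x => lap m μ (P r g) x ^ 2 * m x) ∧
      ∑' x, lap m μ (P r g) x ^ 2 * m x ≤ W := fun r hr => by
    rw [← hPcomm g hg r]
    refine hPl2 _ (summable_of_hasFiniteSupport ?_) r hr
    exact (lap_support_finite (m := m) hsym hlf hg).subset fun x hx hlx => hx (by simp [hlx])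
  have hu0 : Summable fun p : V × V => μ p.1 p.2 * (P 0 g p.2 - P 0 g p.1) ^ 2 := by
    simpa only [hP0] using summable_sq_grad_of_support_finite hsym hlf hg
  -- the `η k` need not take values in `[-1, 1]`; composing with `φ` fixes this without
  -- increasing `Γ`
  obtain ⟨φ, hφ, hφ0, hφ1, hφabs⟩ := exists_lipschitzWith_one_clamp
  have hcutoff : ∀ k : ℕ, 1 ≤ k → ∀ s : Finset (V × V),
      ∑ p ∈ s, μ p.1 p.2 * (φ ∘ η k) p.1 ^ 2 * (P t g p.2 - P t g p.1) ^ 2 ≤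
        (√(2 * QN μ g) + 2 * √(2 * (1 / (k : ℝ)) * W) * t) ^ 2 := by
    intro k hk s
    obtain ⟨T, hT⟩ := exists_finset_support_neighbors_subset hlf (e := φ ∘ η k)
      ((hηfin k).subset fun x hx hηx => hx (by simp [hηx, hφ0]))
    have hc : ∀ x, gam m μ (φ ∘ η k) (φ ∘ η k) x ≤ 1 / (k : ℝ) := fun x =>
      (gam_comp_self_le hm hnn hlf hφ (η k) x).trans (hηgam k x hk)
    simpa only [hP0] using (sum_le_cutoffEnergy hnn hT (P t g) s).trans
      (cutoffEnergy_le_of_hasDerivAt hm hsym hnn hlf (hheat g) hW hu0 hT (fun x => hφabs _)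
        (by positivity) hc ht)
  have hbound : Tendsto (fun k : ℕ => (√(2 * QN μ g) + 2 * √(2 * (1 / (k : ℝ)) * W) * t) ^ 2)
      atTop (nhds (2 * QN μ g)) := by
    have h : Tendsto (fun k : ℕ => 2 * (1 / (k : ℝ)) * W) atTop (nhds 0) := by
      simpa using (tendsto_one_div_atTop_nhds_zero_nat.const_mul 2).mul_const W
    simpa only [Real.sqrt_zero, mul_zero, zero_mul, add_zero,
      Real.sq_sqrt (mul_nonneg zero_le_two (QN_nonneg hnn g))] using
      (((h.sqrt.const_mul 2).mul_const t).const_add (√(2 * QN μ g))).pow 2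
  obtain ⟨hsum, hle⟩ := summable_and_tsum_sq_grad_le_of_cutoffs hnn
    (fun x => hφ1 ▸ (hφ.continuous.tendsto 1).comp (hηlim x)) hbound
    (eventually_atTop.2 ⟨1, hcutoff⟩)
  refine ⟨hsum, ?_⟩
  rw [← two_mul_QN] at hle
  linarith

theorem summable_and_tsum_abs_two_mul_gam_le (hm : ∀ x, 0 < m x) (hnn : ∀ x y, 0 ≤ μ x y)
    (hlf : ∀ x, (support (μ x)).Finite) {u v : V → ℝ}
    (hu : Summable fun p : V × V => μ p.1 p.2 * (u p.2 - u p.1) ^ 2)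
    (hv : Summable fun p : V × V => μ p.1 p.2 * (v p.2 - v p.1) ^ 2) :
    Summable (fun x => |2 * gam m μ u v x| * m x) ∧
      ∑' x, |2 * gam m μ u v x| * m x ≤ 2 * √(QN μ u * QN μ v) := by
  obtain ⟨hF, hFle⟩ := summable_and_tsum_sqrt_mul_sqrt_le
    (f := fun p : V × V => μ p.1 p.2 * (u p.2 - u p.1) ^ 2)
    (g := fun p : V × V => μ p.1 p.2 * (v p.2 - v p.1) ^ 2)
    (fun p => mul_nonneg (hnn p.1 p.2) (sq_nonneg _))
    (fun p => mul_nonneg (hnn p.1 p.2) (sq_nonneg _)) hu hv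
  set F : V × V → ℝ := fun p =>
    √(μ p.1 p.2 * (u p.2 - u p.1) ^ 2) * √(μ p.1 p.2 * (v p.2 - v p.1) ^ 2)
  have hFeq : ∀ x y, F (x, y) = |μ x y * ((u y - u x) * (v y - v x))| := fun x y => by
    simp only [F]
    rw [← Real.sqrt_mul (mul_nonneg (hnn x y) (sq_nonneg _)), ← Real.sqrt_sq_eq_abs]
    ring_nf
  have hpoint : ∀ x, |2 * gam m μ u v x| * m x ≤ ∑' y, F (x, y) := fun x => by
    rw [← abs_of_pos (hm x), ← abs_mul, mul_right_comm, two_mul_mul_gam hm]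
    simpa only [hFeq, Real.norm_eq_abs] using
      norm_tsum_le_tsum_norm (summable_mul_of_support_finite hlf x _).norm
  obtain ⟨hfibre, hrow⟩ := (summable_prod_of_nonneg fun p => by positivity).1 hF
  have hsum : Summable fun x => |2 * gam m μ u v x| * m x :=
    hrow.of_nonneg_of_le (fun x => mul_nonneg (abs_nonneg _) (hm x).le) hpoint
  refine ⟨hsum, ?_⟩
  calc ∑' x, |2 * gam m μ u v x| * m x ≤ ∑' x, ∑' y, F (x, y) := hsum.tsum_le_tsum hpoint hrow
    _ = ∑' p, F p := (hF.tsum_prod' hfibre).symm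
    _ ≤ √(2 * QN μ u) * √(2 * QN μ v) := by rw [two_mul_QN, two_mul_QN]; exact hFle
    _ = 2 * √(QN μ u * QN μ v) := by
        rw [← Real.sqrt_mul (mul_nonneg zero_le_two (QN_nonneg hnn u)),
          show 2 * QN μ u * (2 * QN μ v) = 2 ^ 2 * (QN μ u * QN μ v) by ring,
          Real.sqrt_mul (by positivity), Real.sqrt_sq zero_le_two]

end WeightedGraph

theorem stmt12_general {V : Type*} (m : V → ℝ) (μ : V → V → ℝ)
    (hm : ∀ x, 0 < m x) (hsym : ∀ x y, μ x y = μ y x)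
    (hnn : ∀ x y, 0 ≤ μ x y) (hlf : ∀ x, (Function.support (μ x)).Finite)
    -- completeness of the graph: cut-off functions `η_k`
    (η : ℕ → V → ℝ)
    (hηfin : ∀ k, (Function.support (η k)).Finite)
    (hηlim : ∀ x, Tendsto (fun k => η k x) atTop (nhds 1))
    (hηgam : ∀ k x, 1 ≤ k → gam m μ (η k) (η k) x ≤ 1 / (k : ℝ))
    -- the heat semigroup `P t = e^{tΔ}` and its standard properties
    (P : ℝ → (V → ℝ) → V → ℝ)
    (hP0 : ∀ f, P 0 f = f)
    (hheat : ∀ (f : V → ℝ) (x : V) (t : ℝ), HasDerivAt (fun s => P s f x) (lap m μ (P t f) x) t)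
    (hPcomm : ∀ f : V → ℝ, (Function.support f).Finite → ∀ t, P t (lap m μ f) = lap m μ (P t f))
    (hPl2 : ∀ f : V → ℝ, Summable (fun x => f x ^ 2 * m x) → ∀ t, 0 ≤ t →
      Summable (fun x => (P t f x) ^ 2 * m x) ∧ ∑' x, (P t f x) ^ 2 * m x ≤ ∑' x, f x ^ 2 * m x)
    :
    ∀ f : V → ℝ, (Function.support f).Finite → ∀ t, 0 ≤ t →
      Summable (fun x => |2 * gam m μ (P t f) (lap m μ (P t f)) x| * m x) ∧
      ∑' x, |2 * gam m μ (P t f) (lap m μ (P t f)) x| * m x ≤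
        2 * Real.sqrt (QN μ f * QN μ (lap m μ f)) := by
  intro f hf t ht
  obtain ⟨hu, hQu⟩ := QN_heat_le hm hsym hnn hlf η hηfin hηlim hηgam P hP0 hheat hPcomm hPl2 hf ht
  obtain ⟨hv, hQv⟩ := QN_heat_le hm hsym hnn hlf η hηfin hηlim hηgam P hP0 hheat hPcomm hPl2
    (lap_support_finite hsym hlf hf) ht
  rw [hPcomm f hf t] at hv hQv
  obtain ⟨hsum, hle⟩ := summable_and_tsum_abs_two_mul_gam_le hm hnn hlf hu hv
  exact ⟨hsum, hle.trans (mul_le_mul_of_nonneg_left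
    (Real.sqrt_le_sqrt (mul_le_mul hQu hQv (QN_nonneg hnn _) (QN_nonneg hnn _))) zero_le_two)⟩

/-- On a complete graph, for finitely supported `f` and `t ≥ 0`, the time derivative
`(d/dt)Γ(P_t f) = 2Γ(P_t f, ΔP_t f)` is `ℓ¹`-bounded:
`‖(d/dt)Γ(P_t f)‖₁ ≤ 2 √(Q(f) Q(Δf))`. -/
theorem stmt12 {V : Type*} (m : V → ℝ) (μ : V → V → ℝ)
    (hm : ∀ x, 0 < m x) (hsym : ∀ x y, μ x y = μ y x)
    (hnn : ∀ x y, 0 ≤ μ x y) (hlf : ∀ x, (Function.support (μ x)).Finite)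
    -- completeness of the graph: cut-off functions `η_k`
    (η : ℕ → V → ℝ)
    (hηfin : ∀ k, (Function.support (η k)).Finite)
    (hηmono : ∀ k x, η k x ≤ η (k + 1) x)
    (hηlim : ∀ x, Tendsto (fun k => η k x) atTop (nhds 1))
    (hηgam : ∀ k x, 1 ≤ k → gam m μ (η k) (η k) x ≤ 1 / (k : ℝ))
    -- the heat semigroup `P t = e^{tΔ}` and its standard properties
    (P : ℝ → (V → ℝ) → V → ℝ)
    (hP0 : ∀ f, P 0 f = f)
    (hheat : ∀ (f : V → ℝ) (x : V) (t : ℝ), HasDerivAt (fun s => P s f x) (lap m μ (P t f) x) t)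
    (hPcomm : ∀ f : V → ℝ, (Function.support f).Finite → ∀ t, P t (lap m μ f) = lap m μ (P t f))
    (hPl2 : ∀ f : V → ℝ, Summable (fun x => f x ^ 2 * m x) → ∀ t, 0 ≤ t →
      Summable (fun x => (P t f x) ^ 2 * m x) ∧ ∑' x, (P t f x) ^ 2 * m x ≤ ∑' x, f x ^ 2 * m x)
    (hPsym : ∀ f g : V → ℝ, Summable (fun x => f x ^ 2 * m x) →
      Summable (fun x => g x ^ 2 * m x) → ∀ t, 0 ≤ t →
      ∑' x, P t f x * g x * m x = ∑' x, f x * P t g x * m x)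
    (hPpos : ∀ f : V → ℝ, (∀ x, 0 ≤ f x) → ∀ t, 0 ≤ t → ∀ x, 0 ≤ P t f x)
    :
    ∀ f : V → ℝ, (Function.support f).Finite → ∀ t, 0 ≤ t →
      Summable (fun x => |2 * gam m μ (P t f) (lap m μ (P t f)) x| * m x) ∧
      ∑' x, |2 * gam m μ (P t f) (lap m μ (P t f)) x| * m x ≤
        2 * Real.sqrt (QN μ f * QN μ (lap m μ f)) :=
  stmt12_general m μ hm hsym hnn hlf η hηfin hηlim hηgam P hP0 hheat hPcomm hPl2
end

section
/- Conversely, if a locally finite weighted graph satisfies the gradient bound Γ(P_t f) ≤ e^{−2Kt} P_t(Γ(f)) for all finitely supported f and all t ≥ 0, then it satisfies CD(K,∞): Γ₂(f)(x) ≥ KΓ(f)(x) for all finitely supported f and all x. (The proof differentiates F(t) = e^{−2Kt}P_t(Γ(f))(x) − Γ(P_t f)(x) at t = 0, using F ≥ 0 and F(0) = 0.) -/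
open scoped BigOperators
open Filter

/-
The function `F(t) = e^{-2Kt} P_t(Γ f)(x) - Γ(P_t f)(x)` vanishes at `t = 0` (since `P_0 = id`)
and is nonnegative for `t ≥ 0` by the gradient bound, so `F'(0) ≥ 0`. Since `Γ(·)(x)` only
involves the finitely many neighbours of `x`, the heat equation gives
`d/dt Γ(P_t f)(x) |_{t=0} = 2 Γ(f, Δf)(x)`, and hence `F'(0) = -2K Γ(f)(x) + 2 Γ₂(f)(x)`.
-/

open Set

theorem HasDerivAt.nonneg_of_isMinOn_Ici {F : ℝ → ℝ} {F' a : ℝ} (hF : HasDerivAt F F' a)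
    (hmin : IsMinOn F (Ici a) a) : 0 ≤ F' := by
  have hcone : (1 : ℝ) ∈ posTangentConeAt (Ici a) a :=
    mem_posTangentConeAt_of_segment_subset (by simp [segment_eq_Icc, Icc_subset_Ici_self])
  simpa using hmin.localize.hasFDerivWithinAt_nonneg hF.hasFDerivAt.hasFDerivWithinAt hcone

section CarreDuChamp

variable {V : Type*} (m : V → ℝ) (μ : V → V → ℝ) {x : V}

theorem gam_eq_sum {s : Finset V} (hs : Function.support (μ x) ⊆ s) (f g : V → ℝ) :
    gam m μ f g x = 1 / (2 * m x) * ∑ y ∈ s, μ x y * (f y - f x) * (g y - g x) := by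
  rw [gam, tsum_eq_sum' ((Function.support_mul_subset_left _ _).trans
    ((Function.support_mul_subset_left _ _).trans hs))]

theorem hasDerivAt_gam_self (hfin : (Function.support (μ x)).Finite) {u : ℝ → V → ℝ}
    {u' : V → ℝ} {t₀ : ℝ} (hu : ∀ y, HasDerivAt (fun t => u t y) (u' y) t₀) :
    HasDerivAt (fun t => gam m μ (u t) (u t) x) (2 * gam m μ (u t₀) u' x) t₀ := by
  simp only [gam_eq_sum m μ hfin.coe_toFinset.ge]
  have hterm : ∀ y, HasDerivAt (fun t => μ x y * (u t y - u t x) * (u t y - u t x))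
      (2 * (μ x y * (u t₀ y - u t₀ x) * (u' y - u' x))) t₀ := fun y => by
    have hdiff := (hu y).fun_sub (hu x)
    exact (((hdiff.fun_mul hdiff).const_mul (μ x y)).congr_deriv (by ring)).congr_of_eventuallyEq
      (.of_forall fun t => by ring)
  exact ((HasDerivAt.fun_sum fun y _ => hterm y).const_mul _).congr_deriv
    (by rw [← Finset.mul_sum]; ring)

end CarreDuChamp

theorem stmt16_general {V : Type*} (m : V → ℝ) (μ : V → V → ℝ)
    (hlf : ∀ x, (Function.support (μ x)).Finite)
    -- the heat semigroup `P t = e^{tΔ}` and its standard properties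
    (P : ℝ → (V → ℝ) → V → ℝ)
    (hP0 : ∀ f, P 0 f = f)
    (hheat : ∀ (f : V → ℝ) (x : V) (t : ℝ), HasDerivAt (fun s => P s f x) (lap m μ (P t f) x) t)
    (K : ℝ)
    (hgrad : ∀ f : V → ℝ, (Function.support f).Finite → ∀ t, 0 ≤ t → ∀ x : V,
      gam m μ (P t f) (P t f) x ≤ Real.exp (-2 * K * t) * P t (fun y => gam m μ f f y) x) :
    ∀ f : V → ℝ, (Function.support f).Finite → ∀ x : V,
      K * gam m μ f f x ≤ gam2 m μ f x := by
  intro f hf x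
  have hheat₀ : ∀ g y, HasDerivAt (fun t => P t g y) (lap m μ g y) 0 := fun g y => by
    simpa only [hP0] using hheat g y 0
  set γ : V → ℝ := fun y => gam m μ f f y
  have hexp : HasDerivAt (fun t => Real.exp (-2 * K * t)) (-2 * K) 0 := by
    simpa using ((hasDerivAt_id (0 : ℝ)).const_mul (-2 * K)).exp
  have hF := (hexp.mul (hheat₀ γ x)).sub (hasDerivAt_gam_self m μ (hlf x) (hheat₀ f))
  have hmin : IsMinOn (fun t => Real.exp (-2 * K * t) * P t γ x - gam m μ (P t f) (P t f) x)
      (Ici 0) 0 := fun t ht => by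
    simpa [hP0, γ] using hgrad f hf t ht x
  have hF'_nonneg := hF.nonneg_of_isMinOn_Ici hmin
  simp only [hP0, mul_zero, Real.exp_zero, one_mul] at hF'_nonneg
  rw [gam2]
  linarith

/-- Converse: if the gradient bound `Γ(P_t f) ≤ e^{-2Kt} P_t(Γ(f))` holds for all finitely
supported `f` and all `t ≥ 0`, then `CD(K,∞)` holds on finitely supported functions:
`Γ₂(f)(x) ≥ K Γ(f)(x)`. -/
theorem stmt16 {V : Type*} (m : V → ℝ) (μ : V → V → ℝ)
    (hm : ∀ x, 0 < m x) (hsym : ∀ x y, μ x y = μ y x)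
    (hnn : ∀ x y, 0 ≤ μ x y) (hlf : ∀ x, (Function.support (μ x)).Finite)
    -- the heat semigroup `P t = e^{tΔ}` and its standard properties
    (P : ℝ → (V → ℝ) → V → ℝ)
    (hP0 : ∀ f, P 0 f = f)
    (hheat : ∀ (f : V → ℝ) (x : V) (t : ℝ), HasDerivAt (fun s => P s f x) (lap m μ (P t f) x) t)
    (hPcomm : ∀ f : V → ℝ, (Function.support f).Finite → ∀ t, P t (lap m μ f) = lap m μ (P t f))
    (hPl2 : ∀ f : V → ℝ, Summable (fun x => f x ^ 2 * m x) → ∀ t, 0 ≤ t →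
      Summable (fun x => (P t f x) ^ 2 * m x) ∧ ∑' x, (P t f x) ^ 2 * m x ≤ ∑' x, f x ^ 2 * m x)
    (hPsym : ∀ f g : V → ℝ, Summable (fun x => f x ^ 2 * m x) →
      Summable (fun x => g x ^ 2 * m x) → ∀ t, 0 ≤ t →
      ∑' x, P t f x * g x * m x = ∑' x, f x * P t g x * m x)
    (hPpos : ∀ f : V → ℝ, (∀ x, 0 ≤ f x) → ∀ t, 0 ≤ t → ∀ x, 0 ≤ P t f x)
    -- `(d/dt)|_{t=0} P_t g (x) = Δ g (x)` for finitely supported `g`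
    (hderiv0 : ∀ g : V → ℝ, (Function.support g).Finite → ∀ x : V,
      HasDerivAt (fun t => P t g x) (lap m μ g x) 0)
    (K : ℝ)
    (hgrad : ∀ f : V → ℝ, (Function.support f).Finite → ∀ t, 0 ≤ t → ∀ x : V,
      gam m μ (P t f) (P t f) x ≤ Real.exp (-2 * K * t) * P t (fun y => gam m μ f f y) x) :
    ∀ f : V → ℝ, (Function.support f).Finite → ∀ x : V,
      K * gam m μ f f x ≤ gam2 m μ f x :=
  stmt16_general m μ hlf P hP0 hheat K hgrad
end
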